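/- Let G be a group acting on a set X, and let K be a normal subgroup of G whose restricted action on X is free. Then the quotient equivariant map (π, p) : G⋉X → (G/K)⋉(X/K), where π : G → G/K is the quotient homomorphism and p : X → X/K is the orbit map, is an essential equivalence: it is fully faithful and essentially surjective. -/

import Mathlib

/-- An equivariant map `(φ, f) : G⋉X → H⋉Y` between translation groupoids is *fully
faithful* if for all `x, x' ∈ X` and `h ∈ H` with `h • f x = f x'` there is a unique
`g ∈ G` with `φ g = h` and `g • x = x'`. -/
def IsFullyFaithful {G H : Type*} [Group G] [Group H] {X Y : Type*}
    [MulAction G X] [MulAction H Y] (φ : G →* H) (f : X → Y) : Prop :=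
  ∀ (x x' : X) (h : H), h • f x = f x' → ∃! g : G, φ g = h ∧ g • x = x'

/-- An equivariant map with underlying map `f : X → Y` into an `H`-set `Y` is
*essentially surjective* if every `y ∈ Y` is of the form `h • f x`. -/
def IsEssSurj {H : Type*} [Group H] {X Y : Type*} [MulAction H Y] (f : X → Y) : Prop :=
  ∀ y : Y, ∃ (x : X) (h : H), h • f x = y

variable {G : Type*} [Group G] {X : Type*} [MulAction G X]

/-- The set `X/K` of `K`-orbits of the `G`-set `X`, for a subgroup `K ≤ G`. -/
def OrbitQuot (K : Subgroup G) (X : Type*) [MulAction G X] : Type _ :=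
  Quotient (MulAction.orbitRel K X)

/-- The orbit map `X → X/K`. -/
def OrbitQuot.mk (K : Subgroup G) (x : X) : OrbitQuot K X :=
  Quotient.mk (MulAction.orbitRel K X) x

/-- For `K ⊴ G` normal, the induced action of `G/K` on `X/K`: `(gK) • (K•x) = K•(g•x)`. -/
instance OrbitQuot.instMulAction (K : Subgroup G) [K.Normal] :
    MulAction (G ⧸ K) (OrbitQuot K X) where
  smul g x := Quotient.liftOn₂ g x (fun g x => OrbitQuot.mk K (g • x)) <| by
    intro g₁ x₁ g₂ x₂ hg hx
    have hg' : g₁⁻¹ * g₂ ∈ K := QuotientGroup.leftRel_apply.mp hg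
    have hx' : x₁ ∈ MulAction.orbit K x₂ := hx
    obtain ⟨k, hk⟩ := hx'
    apply Quotient.sound
    show g₁ • x₁ ∈ MulAction.orbit K (g₂ • x₂)
    refine ⟨⟨g₁ * ((k : G) * (g₁⁻¹ * g₂)⁻¹) * g₁⁻¹,
      Subgroup.Normal.conj_mem inferInstance _ (K.mul_mem k.2 (K.inv_mem hg')) g₁⟩, ?_⟩
    show (g₁ * ((k : G) * (g₁⁻¹ * g₂)⁻¹) * g₁⁻¹) • g₂ • x₂ = g₁ • x₁
    have hk' : (k : G) • x₂ = x₁ := hk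
    rw [← hk', ← mul_smul, ← mul_smul]
    congr 1
    group
  one_smul := by
    rintro ⟨x⟩
    exact congrArg (OrbitQuot.mk K) (one_smul G x)
  mul_smul := by
    rintro ⟨a⟩ ⟨b⟩ ⟨x⟩
    exact congrArg (OrbitQuot.mk K) (mul_smul a b x)

theorem isEssSurj_of_surjective {H : Type*} [Group H] {X Y : Type*} [MulAction H Y]
    {f : X → Y} (hf : Function.Surjective f) : IsEssSurj (H := H) f := fun y =>
  let ⟨x, hx⟩ := hf y
  ⟨x, 1, by rw [one_smul, hx]⟩

theorem eq_of_coe_eq_of_smul_eq_of_free {K : Subgroup G}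
    (hfree : ∀ (k : K) (x : X), (k : G) • x = x → k = 1)
    {g₁ g₂ : G} {x : X} (hg : (g₁ : G ⧸ K) = g₂) (hx : g₁ • x = g₂ • x) : g₁ = g₂ := by
  have hmem : g₁⁻¹ * g₂ ∈ K := QuotientGroup.eq.mp hg
  have hfix : (g₁⁻¹ * g₂) • x = x := by rw [mul_smul, ← hx, inv_smul_smul]
  have hone : g₁⁻¹ * g₂ = 1 := congrArg Subtype.val (hfree ⟨_, hmem⟩ x hfix)
  exact inv_mul_eq_one.mp hone

namespace OrbitQuot

variable (K : Subgroup G)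

theorem mk_surjective : Function.Surjective (mk K (X := X)) :=
  Quotient.mk_surjective

variable {K}

theorem mk_eq_mk_iff {x y : X} : mk K x = mk K y ↔ ∃ k : K, (k : G) • y = x :=
  Quotient.eq

theorem mk_smul [K.Normal] (g : G) (x : X) : mk K (g • x) = (g : G ⧸ K) • mk K x :=
  rfl

theorem isFullyFaithful_mk [K.Normal] (hfree : ∀ (k : K) (x : X), (k : G) • x = x → k = 1) :
    IsFullyFaithful (QuotientGroup.mk' K) (mk K (X := X)) := by
  intro x x' h hs
  obtain ⟨g, rfl⟩ := QuotientGroup.mk'_surjective K h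
  obtain ⟨k, hk⟩ := mk_eq_mk_iff.mp ((mk_smul g x).trans hs)
  have hcoset : QuotientGroup.mk' K ((k : G)⁻¹ * g) = QuotientGroup.mk' K g := by
    rw [map_mul, QuotientGroup.mk'_apply, (QuotientGroup.eq_one_iff _).mpr (K.inv_mem k.2),
      one_mul]
  have hmove : ((k : G)⁻¹ * g) • x = x' := by rw [mul_smul, ← hk, inv_smul_smul]
  refine ⟨(k : G)⁻¹ * g, ⟨hcoset, hmove⟩, fun g' ⟨hg', hx'⟩ => ?_⟩
  exact eq_of_coe_eq_of_smul_eq_of_free hfree (hg'.trans hcoset.symm) (hx'.trans hmove.symm)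

end OrbitQuot

/-- If `K ⊴ G` acts freely on `X`, then the quotient equivariant map
`(π, p) : G⋉X → (G/K)⋉(X/K)` is an essential equivalence: it is equivariant,
fully faithful and essentially surjective. -/
theorem stmt_2 (K : Subgroup G) [K.Normal]
    (hfree : ∀ (k : K) (x : X), (k : G) • x = x → k = 1) :
    (∀ (g : G) (x : X),
        OrbitQuot.mk K (g • x) = QuotientGroup.mk' K g • OrbitQuot.mk K x)
    ∧ IsFullyFaithful (QuotientGroup.mk' K) (OrbitQuot.mk K (X := X))
    ∧ IsEssSurj (H := G ⧸ K) (OrbitQuot.mk K (X := X)) :=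
  ⟨OrbitQuot.mk_smul, OrbitQuot.isFullyFaithful_mk hfree,
    isEssSurj_of_surjective (OrbitQuot.mk_surjective K)⟩
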